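/- For all l, r ∈ H', all σ ∈ ℝ^n_+ and all i ∈ {1,…,n}, the partial derivative of the Galerkin-approximated measurement satisfies ∂F_{l,r}(σ)/∂σ_i = −(λ^l)ᵀ B_i λ^r, where B_i ∈ ℝ^{N×N} is the matrix with (j,k)-th entry b_i(Λ_j, Λ_k). -/

import Mathlib

/-!
Write `u_τ = ũ_τ^l` and `w = ũ_σ^r`. Testing the Galerkin equations of `u_σ`, `u_σ'` and `w`
against each other and using symmetry gives the exact identity
`r(u_σ') - r(u_σ) = -(b_σ' - b_σ)(w, u_σ') = -∑ⱼ (σ'ⱼ - σⱼ) bⱼ(w, u_σ')`.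
Coercivity of `b_σ'`, uniform for `σ'` near `σ`, gives `‖u_σ' - u_σ‖ ≲ ‖b_σ' - b_σ‖ ≲ ‖σ' - σ‖`,
so `σ' ↦ u_σ'` is continuous at `σ`. Each summand is then a factor vanishing at `σ` times a factor
continuous at `σ`, hence differentiable with derivative `bⱼ(w, u_σ) dσⱼ`; by symmetry of `bᵢ`,
`bᵢ(w, u_σ) = (λ^l)ᵀ Bᵢ λ^r`.
-/

open Matrix Filter Topology Asymptotics

theorem HasFDerivAt.bilinear_of_eq_zero_of_continuousAt {𝕜 E F G K : Type*}
    [NontriviallyNormedField 𝕜] [NormedAddCommGroup E] [NormedSpace 𝕜 E]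
    [NormedAddCommGroup F] [NormedSpace 𝕜 F] [NormedAddCommGroup G] [NormedSpace 𝕜 G]
    [NormedAddCommGroup K] [NormedSpace 𝕜 K]
    {f : E → F} {f' : E →L[𝕜] F} {g : E → G} {x : E} (B : F →L[𝕜] G →L[𝕜] K)
    (hf : HasFDerivAt f f' x) (hfx : f x = 0) (hg : ContinuousAt g x) :
    HasFDerivAt (fun y => B (f y) (g y)) ((B.flip (g x)).comp f') x := by
  have hmain : HasFDerivAt (fun y => B (f y) (g x)) ((B.flip (g x)).comp f') x :=
    (B.flip (g x)).hasFDerivAt.comp x hf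
  have hf_O : f =O[𝓝 x] (· - x) := by simpa [hfx] using hf.isBigO_sub
  have hg_o : (g · - g x) =o[𝓝 x] (fun _ => (1 : ℝ)) :=
    (isLittleO_one_iff ℝ).2 (tendsto_sub_nhds_zero_iff.2 hg)
  have hrem : HasFDerivAt (fun y => B (f y) (g y - g x)) (0 : E →L[𝕜] K) x := by
    refine hasFDerivAt_iff_isLittleO.2 ?_
    have hB : (fun y => B (f y) (g y - g x)) =O[𝓝 x] fun y => ‖f y‖ * ‖g y - g x‖ :=
      .of_bound ‖B‖ (.of_forall fun y => by
        simpa [mul_assoc, abs_mul] using B.le_opNorm₂ (f y) (g y - g x))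
    simpa [hfx] using hB.trans_isLittleO
      ((hf_O.norm_norm.mul_isLittleO hg_o.norm_left).trans_isBigO (by simpa using isBigO_refl _ _))
  convert hmain.add hrem using 1
  · ext y; simp
  · simp

section Galerkin

variable {H : Type*} [NormedAddCommGroup H] [NormedSpace ℝ H] (V : Submodule ℝ H)

def IsGalerkinSolution (a : H →L[ℝ] H →L[ℝ] ℝ) (l : H →L[ℝ] ℝ) (u : H) : Prop :=
  u ∈ V ∧ ∀ v ∈ V, a u v = l v

variable {V} {a a' : H →L[ℝ] H →L[ℝ] ℝ} {l r : H →L[ℝ] ℝ} {u u' w : H}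

theorem IsGalerkinSolution.apply_sub_apply_eq (ha : ∀ x y, a x y = a y x)
    (ha' : ∀ x y, a' x y = a' y x) (hu : IsGalerkinSolution V a l u)
    (hu' : IsGalerkinSolution V a' l u') (hw : IsGalerkinSolution V a r w) :
    r u - r u' = (a' - a) w u' := by
  have hru : r u = a' w u' :=
    calc r u = a w u := (hw.2 u hu.1).symm
      _ = l w := (ha w u).trans (hu.2 w hw.1)
      _ = a' w u' := (hu'.2 w hw.1).symm.trans (ha' u' w)
  rw [hru, ← hw.2 u' hu'.1, _root_.sub_apply, _root_.sub_apply]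

theorem IsGalerkinSolution.mul_norm_sub_le {c : ℝ} (hcoer : ∀ v ∈ V, c * ‖v‖ ^ 2 ≤ a' v v)
    (hu : IsGalerkinSolution V a l u) (hu' : IsGalerkinSolution V a' l u') :
    c * ‖u' - u‖ ≤ ‖a - a'‖ * ‖u‖ := by
  set d := u' - u
  have hd : d ∈ V := V.sub_mem hu'.1 hu.1
  have hdd : a' d d = (a - a') u d := by
    rw [show a' d = a' u' - a' u from map_sub a' u' u, _root_.sub_apply,
      hu'.2 d hd, ← hu.2 d hd]
    rfl
  have hquad : c * ‖d‖ * ‖d‖ ≤ ‖a - a'‖ * ‖u‖ * ‖d‖ :=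
    calc c * ‖d‖ * ‖d‖ = c * ‖d‖ ^ 2 := by ring
      _ ≤ (a - a') u d := hdd ▸ hcoer d hd
      _ ≤ ‖a - a'‖ * ‖u‖ * ‖d‖ := (Real.le_norm_self _).trans ((a - a').le_opNorm₂ u d)
  rcases (norm_nonneg d).eq_or_lt with hd0 | hd0
  · rw [← hd0, mul_zero]
    positivity
  · exact le_of_mul_le_mul_right hquad hd0

theorem IsGalerkinSolution.isBigO_sub {ι : Type*} {L : Filter ι} {A : ι → H →L[ℝ] H →L[ℝ] ℝ}
    {U : ι → H} {c : ℝ} (hc : 0 < c) (hcoer : ∀ᶠ i in L, ∀ v ∈ V, c * ‖v‖ ^ 2 ≤ A i v v)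
    (hU : ∀ᶠ i in L, IsGalerkinSolution V (A i) l (U i)) (hu : IsGalerkinSolution V a l u) :
    (fun i => U i - u) =O[L] fun i => ‖A i - a‖ := by
  refine .of_bound (‖u‖ / c) ?_
  filter_upwards [hcoer, hU] with i hcoer' hU'
  rw [Real.norm_of_nonneg (ContinuousLinearMap.opNorm_nonneg _), div_mul_eq_mul_div,
    le_div_iff₀ hc, mul_comm, norm_sub_rev (A i), mul_comm ‖u‖]
  exact hu.mul_norm_sub_le hcoer' hU'

end Galerkin

section WeightedForm

variable {H ι : Type*} [NormedAddCommGroup H] [NormedSpace ℝ H] [Fintype ι]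
  (b0 : H →L[ℝ] H →L[ℝ] ℝ) (b : ι → H →L[ℝ] H →L[ℝ] ℝ)

noncomputable def weightedForm (σ : ι → ℝ) : H →L[ℝ] H →L[ℝ] ℝ :=
  b0 + ∑ j, σ j • b j

theorem weightedForm_apply (σ : ι → ℝ) (x y : H) :
    weightedForm b0 b σ x y = b0 x y + ∑ j, σ j * b j x y := by
  simp [weightedForm]

theorem weightedForm_sub_apply (σ σ' : ι → ℝ) (x y : H) :
    (weightedForm b0 b σ' - weightedForm b0 b σ) x y = ∑ j, (σ' j - σ j) * b j x y := by
  simp only [_root_.sub_apply, weightedForm_apply, sub_mul, Finset.sum_sub_distrib]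
  ring

theorem norm_weightedForm_sub_le (σ σ' : ι → ℝ) :
    ‖weightedForm b0 b σ' - weightedForm b0 b σ‖ ≤ (∑ j, ‖b j‖) * ‖σ' - σ‖ := by
  refine ContinuousLinearMap.opNorm_le_bound₂ _ (by positivity) fun x y => ?_
  rw [weightedForm_sub_apply, Finset.sum_mul, Finset.sum_mul, Finset.sum_mul]
  refine (Finset.abs_sum_le_sum_abs _ _).trans (Finset.sum_le_sum fun j _ => ?_)
  have hσj : |σ' j - σ j| ≤ ‖σ' - σ‖ := by simpa using norm_le_pi_norm (σ' - σ) j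
  have hbj : |b j x y| ≤ ‖b j‖ * ‖x‖ * ‖y‖ := (b j).le_opNorm₂ x y
  calc |(σ' j - σ j) * b j x y| ≤ ‖σ' - σ‖ * (‖b j‖ * ‖x‖ * ‖y‖) := by
        rw [abs_mul]
        gcongr
    _ = ‖b j‖ * ‖σ' - σ‖ * ‖x‖ * ‖y‖ := by ring

theorem weightedForm_comm (hb0 : ∀ x y, b0 x y = b0 y x) (hb : ∀ j x y, b j x y = b j y x)
    (σ : ι → ℝ) (x y : H) : weightedForm b0 b σ x y = weightedForm b0 b σ y x := by
  simp only [weightedForm_apply, hb0 x y, hb _ x y]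

theorem mul_le_weightedForm_apply_self (hb0 : ∀ v, 0 ≤ b0 v v) (hb : ∀ j v, 0 ≤ b j v v)
    {σ : ι → ℝ} {t : ℝ} (ht1 : t ≤ 1) (htσ : ∀ j, t ≤ σ j) (v : H) :
    t * (b0 v v + ∑ j, b j v v) ≤ weightedForm b0 b σ v v := by
  rw [weightedForm_apply, mul_add, Finset.mul_sum]
  gcongr with j
  · exact mul_le_of_le_one_left (hb0 v) ht1
  · exact hb j v
  · exact htσ j

theorem eventually_forall_lt_apply {t : ℝ} {σ : ι → ℝ} (h : ∀ j, t < σ j) :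
    ∀ᶠ σ' in 𝓝 σ, ∀ j, t < σ' j :=
  eventually_all.2 fun j => (continuous_apply j).continuousAt.eventually (lt_mem_nhds (h j))

theorem exists_eventually_coercive_weightedForm (hb0 : ∀ v, 0 ≤ b0 v v)
    (hb : ∀ j v, 0 ≤ b j v v) {β : ℝ} (hβ : 0 < β)
    (hcoer : ∀ v : H, β * ‖v‖ ^ 2 ≤ b0 v v + ∑ j, b j v v) {σ : ι → ℝ} (hσ : ∀ j, 0 < σ j) :
    ∃ c > 0, ∀ᶠ σ' in 𝓝 σ, ∀ v, c * ‖v‖ ^ 2 ≤ weightedForm b0 b σ' v v := by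
  obtain ⟨t, ht0, ht1, htσ⟩ : ∃ t : ℝ, 0 < t ∧ t ≤ 1 ∧ ∀ j, t < σ j :=
    ((eventually_mem_nhdsWithin (s := Set.Ioi 0)).and (nhdsWithin_le_nhds
      ((eventually_le_nhds zero_lt_one).and (eventually_all.2 fun j => eventually_lt_nhds (hσ j))))
      : ∀ᶠ t in 𝓝[>] (0 : ℝ), 0 < t ∧ t ≤ 1 ∧ ∀ j, t < σ j).exists
  refine ⟨t * β, mul_pos ht0 hβ, ?_⟩
  filter_upwards [eventually_forall_lt_apply htσ] with σ' hσ' v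
  calc t * β * ‖v‖ ^ 2 = t * (β * ‖v‖ ^ 2) := mul_assoc _ _ _
    _ ≤ t * (b0 v v + ∑ j, b j v v) := mul_le_mul_of_nonneg_left (hcoer v) ht0.le
    _ ≤ weightedForm b0 b σ' v v :=
      mul_le_weightedForm_apply_self b0 b hb0 hb ht1 (fun j => (hσ' j).le) v

variable {b0 b} {V : Submodule ℝ H} {U : (ι → ℝ) → H} {l r : H →L[ℝ] ℝ} {w : H} {σ : ι → ℝ}
  {c : ℝ}

theorem continuousAt_of_isGalerkinSolution_weightedForm (hc : 0 < c)
    (hcoer : ∀ᶠ σ' in 𝓝 σ, ∀ v ∈ V, c * ‖v‖ ^ 2 ≤ weightedForm b0 b σ' v v)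
    (hU : ∀ᶠ σ' in 𝓝 σ, IsGalerkinSolution V (weightedForm b0 b σ') l (U σ')) :
    ContinuousAt U σ := by
  have hform : (fun σ' => ‖weightedForm b0 b σ' - weightedForm b0 b σ‖) =O[𝓝 σ] (· - σ) :=
    .of_bound (∑ j, ‖b j‖) (.of_forall fun σ' => by
      simpa [Real.norm_of_nonneg (ContinuousLinearMap.opNorm_nonneg _)]
        using norm_weightedForm_sub_le b0 b σ σ')
  have hσ : Tendsto (· - σ) (𝓝 σ) (𝓝 0) := tendsto_sub_nhds_zero_iff.2 tendsto_id
  exact tendsto_sub_nhds_zero_iff.1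
    (((hU.self_of_nhds.isBigO_sub hc hcoer hU).trans hform).trans_tendsto hσ)

theorem hasFDerivAt_apply_of_isGalerkinSolution_weightedForm
    (hb0 : ∀ x y, b0 x y = b0 y x) (hb : ∀ j x y, b j x y = b j y x) (hc : 0 < c)
    (hcoer : ∀ᶠ σ' in 𝓝 σ, ∀ v ∈ V, c * ‖v‖ ^ 2 ≤ weightedForm b0 b σ' v v)
    (hU : ∀ᶠ σ' in 𝓝 σ, IsGalerkinSolution V (weightedForm b0 b σ') l (U σ'))
    (hw : IsGalerkinSolution V (weightedForm b0 b σ) r w) :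
    HasFDerivAt (fun σ' => r (U σ'))
      (-∑ j, b j w (U σ) • (ContinuousLinearMap.proj j : (ι → ℝ) →L[ℝ] ℝ)) σ := by
  have hUσ := hU.self_of_nhds
  have hUcont := continuousAt_of_isGalerkinSolution_weightedForm hc hcoer hU
  have hterm : ∀ j, HasFDerivAt (fun σ' => (σ' j - σ j) * b j w (U σ'))
      (b j w (U σ) • (ContinuousLinearMap.proj j : (ι → ℝ) →L[ℝ] ℝ)) σ := fun j =>
    (((hasFDerivAt_apply (𝕜 := ℝ) j σ).sub_const (σ j)).bilinear_of_eq_zero_of_continuousAt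
      (ContinuousLinearMap.mul ℝ ℝ) (sub_self _)
      ((b j w).continuous.continuousAt.comp hUcont)).congr_fderiv (by ext; simp [mul_comm])
  have hperturb : (fun σ' => r (U σ')) =ᶠ[𝓝 σ]
      fun σ' => r (U σ) - ∑ j, (σ' j - σ j) * b j w (U σ') := by
    filter_upwards [hU] with σ' hU'
    have := hUσ.apply_sub_apply_eq (weightedForm_comm b0 b hb0 hb σ)
      (weightedForm_comm b0 b hb0 hb σ') hU' hw
    rw [weightedForm_sub_apply] at this
    linarith
  exact ((HasFDerivAt.fun_sum fun j _ => hterm j).const_sub (r (U σ))).congr_of_eventuallyEq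
    hperturb

end WeightedForm

theorem ContinuousLinearMap.apply_sum_smul_sum_smul {H κ : Type*} [NormedAddCommGroup H]
    [NormedSpace ℝ H] [Fintype κ] (a : H →L[ℝ] H →L[ℝ] ℝ) (Λ : κ → H) (x y : κ → ℝ) :
    a (∑ j, x j • Λ j) (∑ k, y k • Λ k) = x ⬝ᵥ ((Matrix.of fun j k => a (Λ j) (Λ k)) *ᵥ y) := by
  simp only [map_sum, map_smul, FunLike.coe_sum, FunLike.coe_smul,
    Finset.sum_apply, Pi.smul_apply, smul_eq_mul, dotProduct, mulVec, of_apply, Finset.mul_sum]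
  rw [Finset.sum_comm]
  exact Finset.sum_congr rfl fun j _ => Finset.sum_congr rfl fun k _ => by ring

theorem stmt_19_general
    {H : Type*} [NormedAddCommGroup H] [InnerProductSpace ℝ H]
    {n N : ℕ}
    (b0 : H →L[ℝ] H →L[ℝ] ℝ) (b : Fin n → H →L[ℝ] H →L[ℝ] ℝ)
    (hb0symm : ∀ u v : H, b0 u v = b0 v u)
    (hb0pos : ∀ v : H, 0 ≤ b0 v v)
    (hbsymm : ∀ i, ∀ u v : H, b i u v = b i v u)
    (hbpos : ∀ i, ∀ v : H, 0 ≤ b i v v)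
    (β : ℝ) (hβ : 0 < β)
    (hcoer : ∀ v : H, β * ‖v‖ ^ 2 ≤ b0 v v + ∑ i, b i v v)
    (Λ : Fin N → H)
    -- the Galerkin solution operator on V = span Λ
    (ut : (Fin n → ℝ) → (H →L[ℝ] ℝ) → H)
    (hmem : ∀ σ l, ut σ l ∈ Submodule.span ℝ (Set.range Λ))
    (hut : ∀ σ : Fin n → ℝ, (∀ i, 0 < σ i) → ∀ l : H →L[ℝ] ℝ,
      ∀ v ∈ Submodule.span ℝ (Set.range Λ),
        b0 (ut σ l) v + ∑ i, σ i * b i (ut σ l) v = l v) :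
    ∀ l r : H →L[ℝ] ℝ, ∀ σ : Fin n → ℝ, (∀ i, 0 < σ i) → ∀ i : Fin n,
      -- coefficient vectors of ũ_σ^l and ũ_σ^r in the basis Λ
      ∀ lamL lamR : Fin N → ℝ,
        ut σ l = ∑ j, lamL j • Λ j → ut σ r = ∑ j, lamR j • Λ j →
      ∃ DFt : (Fin n → ℝ) →L[ℝ] ℝ,
        HasFDerivAt (fun σ' => r (ut σ' l)) DFt σ ∧
        DFt (Pi.single i 1) =
          -(lamL ⬝ᵥ ((Matrix.of fun j k : Fin N => b i (Λ j) (Λ k)) *ᵥ lamR)) := by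
  intro l r σ hσ i lamL lamR hL hR
  have hGal : ∀ σ', (∀ j, 0 < σ' j) → ∀ l, IsGalerkinSolution (Submodule.span ℝ (Set.range Λ))
      (weightedForm b0 b σ') l (ut σ' l) := fun σ' hσ' l =>
    ⟨hmem σ' l, fun v hv => (weightedForm_apply b0 b σ' _ v).trans (hut σ' hσ' l v hv)⟩
  obtain ⟨c, hc, hcoerσ⟩ := exists_eventually_coercive_weightedForm b0 b hb0pos hbpos hβ hcoer hσ
  refine ⟨_, hasFDerivAt_apply_of_isGalerkinSolution_weightedForm hb0symm hbsymm hc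
    (hcoerσ.mono fun _ h v _ => h v) ((eventually_forall_lt_apply hσ).mono fun σ' h => hGal σ' h l)
    (hGal σ hσ r), ?_⟩
  simp only [_root_.neg_apply, _root_.sum_apply, _root_.smul_apply, ContinuousLinearMap.proj_apply,
    Pi.single_apply, smul_eq_mul, mul_ite, mul_one, mul_zero, Finset.sum_ite_eq', Finset.mem_univ,
    ↓reduceIte, neg_inj]
  rw [hbsymm, hL, hR, ContinuousLinearMap.apply_sum_smul_sum_smul]

/-- For all `l, r ∈ H'`, all `σ ∈ ℝ^n_+` and all `i ∈ {1,…,n}`,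
the partial derivative of the Galerkin-approximated measurement satisfies
`∂F_{l,r}(σ)/∂σ_i = −(λ^l)ᵀ B_i λ^r`, where `B_i ∈ ℝ^{N×N}` is the matrix with
`(j,k)`-th entry `b_i(Λ_j, Λ_k)`. -/
theorem stmt_19
    {H : Type*} [NormedAddCommGroup H] [InnerProductSpace ℝ H] [CompleteSpace H]
    {n N : ℕ}
    (b0 : H →L[ℝ] H →L[ℝ] ℝ) (b : Fin n → H →L[ℝ] H →L[ℝ] ℝ)
    (hb0symm : ∀ u v : H, b0 u v = b0 v u)
    (hb0pos : ∀ v : H, 0 ≤ b0 v v)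
    (hbsymm : ∀ i, ∀ u v : H, b i u v = b i v u)
    (hbpos : ∀ i, ∀ v : H, 0 ≤ b i v v)
    (C β : ℝ) (hβ : 0 < β) (hCβ : β ≤ C)
    (hcoer : ∀ v : H, β * ‖v‖ ^ 2 ≤ b0 v v + ∑ i, b i v v)
    (hbound : ∀ v : H, b0 v v + ∑ i, b i v v ≤ C * ‖v‖ ^ 2)
    (Λ : Fin N → H) (hΛ : LinearIndependent ℝ Λ)
    -- the Galerkin solution operator on V = span Λ
    (ut : (Fin n → ℝ) → (H →L[ℝ] ℝ) → H)
    (hmem : ∀ σ l, ut σ l ∈ Submodule.span ℝ (Set.range Λ))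
    (hut : ∀ σ : Fin n → ℝ, (∀ i, 0 < σ i) → ∀ l : H →L[ℝ] ℝ,
      ∀ v ∈ Submodule.span ℝ (Set.range Λ),
        b0 (ut σ l) v + ∑ i, σ i * b i (ut σ l) v = l v) :
    ∀ l r : H →L[ℝ] ℝ, ∀ σ : Fin n → ℝ, (∀ i, 0 < σ i) → ∀ i : Fin n,
      -- coefficient vectors of ũ_σ^l and ũ_σ^r in the basis Λ
      ∀ lamL lamR : Fin N → ℝ,
        ut σ l = ∑ j, lamL j • Λ j → ut σ r = ∑ j, lamR j • Λ j →
      ∃ DFt : (Fin n → ℝ) →L[ℝ] ℝ,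
        HasFDerivAt (fun σ' => r (ut σ' l)) DFt σ ∧
        DFt (Pi.single i 1) =
          -(lamL ⬝ᵥ ((Matrix.of fun j k : Fin N => b i (Λ j) (Λ k)) *ᵥ lamR)) :=
  stmt_19_general b0 b hb0symm hb0pos hbsymm hbpos β hβ hcoer Λ ut hmem hut
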